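/- Let (M, η, ξ, φ, g) be a 3-dimensional generalized (κ,μ)-space with κ < 1, let λ = √(1−κ), and let E be a unit eigenvector field of h with hE = λE. Then the Levi-Civita connection ∇ of g satisfies ∇_E E = (dλ(φE)/(2λ)) φE and ∇_{φE} φE = (dλ(E)/(2λ)) E. -/

import Mathlib

open scoped Manifold BigOperators

noncomputable section

/-- The differential `df` of a real valued function `f`, applied to a tangent vector `v`
at the point `x`. -/
def dd (d : ℕ) {M : Type*} [TopologicalSpace M]
    [ChartedSpace (EuclideanSpace ℝ (Fin d)) M]
    (f : M → ℝ) (x : M) (v : TangentSpace (𝓡 d) x) : ℝ :=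
  mfderiv (𝓡 d) 𝓘(ℝ) f x v

/-- A real valued function on a manifold is smooth. -/
def IsSmoothFn (d : ℕ) {M : Type*} [TopologicalSpace M]
    [ChartedSpace (EuclideanSpace ℝ (Fin d)) M] (f : M → ℝ) : Prop :=
  ContMDiff (𝓡 d) 𝓘(ℝ) (⊤ : ℕ∞) f

/-- A vector field (i.e. a section of the tangent bundle) is smooth. -/
def IsSmoothVF (d : ℕ) {M : Type*} [TopologicalSpace M]
    [ChartedSpace (EuclideanSpace ℝ (Fin d)) M]
    [IsManifold (𝓡 d) (⊤ : ℕ∞) M]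
    (V : ∀ x : M, TangentSpace (𝓡 d) x) : Prop :=
  ContMDiff (𝓡 d) (𝓡 d).tangent (⊤ : ℕ∞) (fun x => (⟨x, V x⟩ : TangentBundle (𝓡 d) M))

/-- A contact metric structure `(η, ξ, φ, g)` on a `d`-dimensional smooth manifold `M`,
together with the associated Levi-Civita connection `nabla`, Lie bracket `lie`,
tensor `h = (1/2) L_ξ φ`, Riemann curvature tensor `Rm`, Ricci operator `Q` and
scalar curvature `r`, each characterized by its defining axioms. -/
structure ContactMetricStructure (d : ℕ) (M : Type*) [TopologicalSpace M]
    [ChartedSpace (EuclideanSpace ℝ (Fin d)) M]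
    [IsManifold (𝓡 d) (⊤ : ℕ∞) M] where
  /-- the Riemannian metric -/
  g : ∀ x : M, TangentSpace (𝓡 d) x →ₗ[ℝ] TangentSpace (𝓡 d) x →ₗ[ℝ] ℝ
  /-- the contact form -/
  eta : ∀ x : M, TangentSpace (𝓡 d) x →ₗ[ℝ] ℝ
  /-- the Reeb vector field -/
  xi : ∀ x : M, TangentSpace (𝓡 d) x
  /-- the endomorphism field φ -/
  phi : ∀ x : M, TangentSpace (𝓡 d) x →ₗ[ℝ] TangentSpace (𝓡 d) x
  /-- the Lie bracket of vector fields -/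
  lie : (∀ x : M, TangentSpace (𝓡 d) x) → (∀ x : M, TangentSpace (𝓡 d) x) →
    (∀ x : M, TangentSpace (𝓡 d) x)
  /-- the Levi-Civita connection of `g` -/
  nabla : (∀ x : M, TangentSpace (𝓡 d) x) → (∀ x : M, TangentSpace (𝓡 d) x) →
    (∀ x : M, TangentSpace (𝓡 d) x)
  /-- the tensor field `h = (1/2) L_ξ φ` -/
  h : ∀ x : M, TangentSpace (𝓡 d) x →ₗ[ℝ] TangentSpace (𝓡 d) x
  /-- the Riemann curvature tensor, `Rm x u v w = R(U,V)W` pointwise -/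
  Rm : ∀ x : M, TangentSpace (𝓡 d) x →ₗ[ℝ] TangentSpace (𝓡 d) x →ₗ[ℝ]
    TangentSpace (𝓡 d) x →ₗ[ℝ] TangentSpace (𝓡 d) x
  /-- the Ricci operator -/
  Q : ∀ x : M, TangentSpace (𝓡 d) x →ₗ[ℝ] TangentSpace (𝓡 d) x
  /-- the scalar curvature -/
  r : M → ℝ
  -- smoothness of the data
  xi_smooth : IsSmoothVF d xi
  eta_smooth : ∀ X, IsSmoothVF d X → IsSmoothFn d (fun x => eta x (X x))
  g_smooth : ∀ X Y, IsSmoothVF d X → IsSmoothVF d Y →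
    IsSmoothFn d (fun x => g x (X x) (Y x))
  phi_smooth : ∀ X, IsSmoothVF d X → IsSmoothVF d (fun x => phi x (X x))
  h_smooth : ∀ X, IsSmoothVF d X → IsSmoothVF d (fun x => h x (X x))
  Q_smooth : ∀ X, IsSmoothVF d X → IsSmoothVF d (fun x => Q x (X x))
  r_smooth : IsSmoothFn d r
  lie_smooth : ∀ X Y, IsSmoothVF d X → IsSmoothVF d Y → IsSmoothVF d (lie X Y)
  nabla_smooth : ∀ X Y, IsSmoothVF d X → IsSmoothVF d Y → IsSmoothVF d (nabla X Y)
  -- `g` is a Riemannian metric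
  g_symm : ∀ x u v, g x u v = g x v u
  g_posdef : ∀ (x : M) (u : TangentSpace (𝓡 d) x), u ≠ 0 → 0 < g x u u
  -- characterization of the Lie bracket: `[X,Y] f = X (Y f) - Y (X f)`
  lie_def : ∀ X Y, IsSmoothVF d X → IsSmoothVF d Y → ∀ (f : M → ℝ), IsSmoothFn d f →
    ∀ x, dd d f x (lie X Y x) =
      dd d (fun y => dd d f y (Y y)) x (X x) - dd d (fun y => dd d f y (X y)) x (Y x)
  -- the contact metric axioms
  eta_xi : ∀ x, eta x (xi x) = 1
  eta_eq_g_xi : ∀ x u, eta x u = g x (xi x) u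
  phi_sq : ∀ (x : M) (u : TangentSpace (𝓡 d) x),
    phi x (phi x u) = -u + eta x u • xi x
  phi_xi : ∀ x, phi x (xi x) = 0
  -- `dη = 2 g(·, φ ·)`, with `dη(X,Y) = X(η(Y)) - Y(η(X)) - η([X,Y])`
  contact : ∀ X Y, IsSmoothVF d X → IsSmoothVF d Y → ∀ x,
    dd d (fun y => eta y (Y y)) x (X x) - dd d (fun y => eta y (X y)) x (Y x)
      - eta x (lie X Y x) = 2 * g x (X x) (phi x (Y x))
  -- `h = (1/2) L_ξ φ`, i.e. `2 h X = [ξ, φ X] - φ [ξ, X]`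
  h_def : ∀ X, IsSmoothVF d X → ∀ x,
    (2 : ℝ) • h x (X x) = lie xi (fun y => phi y (X y)) x - phi x (lie xi X x)
  -- `nabla` is the Levi-Civita connection of `g`
  nabla_add_left : ∀ X X' Y, IsSmoothVF d X → IsSmoothVF d X' → IsSmoothVF d Y →
    ∀ x, nabla (fun y => X y + X' y) Y x = nabla X Y x + nabla X' Y x
  nabla_smul_left : ∀ (f : M → ℝ) X Y, IsSmoothFn d f → IsSmoothVF d X → IsSmoothVF d Y →
    ∀ x, nabla (fun y => f y • X y) Y x = f x • nabla X Y x
  nabla_add_right : ∀ X Y Y', IsSmoothVF d X → IsSmoothVF d Y → IsSmoothVF d Y' →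
    ∀ x, nabla X (fun y => Y y + Y' y) x = nabla X Y x + nabla X Y' x
  nabla_leibniz : ∀ (f : M → ℝ) X Y, IsSmoothFn d f → IsSmoothVF d X → IsSmoothVF d Y →
    ∀ x, nabla X (fun y => f y • Y y) x = dd d f x (X x) • Y x + f x • nabla X Y x
  nabla_torsion_free : ∀ X Y, IsSmoothVF d X → IsSmoothVF d Y →
    ∀ x, nabla X Y x - nabla Y X x = lie X Y x
  nabla_metric : ∀ X Y Z, IsSmoothVF d X → IsSmoothVF d Y → IsSmoothVF d Z →
    ∀ x, dd d (fun y => g y (Y y) (Z y)) x (X x)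
      = g x (nabla X Y x) (Z x) + g x (Y x) (nabla X Z x)
  -- the curvature tensor: `R(X,Y)Z = ∇_X ∇_Y Z - ∇_Y ∇_X Z - ∇_[X,Y] Z`
  Rm_def : ∀ X Y Z, IsSmoothVF d X → IsSmoothVF d Y → IsSmoothVF d Z →
    ∀ x, Rm x (X x) (Y x) (Z x)
      = nabla X (nabla Y Z) x - nabla Y (nabla X Z) x - nabla (lie X Y) Z x
  -- existence of orthonormal frames, Ricci operator and scalar curvature as traces
  frame_exists : ∀ x : M, ∃ e : Fin d → TangentSpace (𝓡 d) x,
    ∀ i j, g x (e i) (e j) = if i = j then 1 else 0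
  Q_def : ∀ (x : M) (e : Fin d → TangentSpace (𝓡 d) x),
    (∀ i j, g x (e i) (e j) = if i = j then 1 else 0) →
    ∀ u v, g x (Q x u) v = ∑ i, g x (Rm x (e i) u v) (e i)
  r_def : ∀ (x : M) (e : Fin d → TangentSpace (𝓡 d) x),
    (∀ i j, g x (e i) (e j) = if i = j then 1 else 0) →
    r x = ∑ i, g x (Q x (e i)) (e i)

namespace ContactMetricStructure

variable {d : ℕ} {M : Type*} [TopologicalSpace M]
  [ChartedSpace (EuclideanSpace ℝ (Fin d)) M]
  [IsManifold (𝓡 d) (⊤ : ℕ∞) M]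

/-- A vector field `Z` is a Killing field (infinitesimal isometry): `L_Z g = 0`. -/
def IsKilling (S : ContactMetricStructure d M) (Z : ∀ x : M, TangentSpace (𝓡 d) x) : Prop :=
  IsSmoothVF d Z ∧ ∀ X Y, IsSmoothVF d X → IsSmoothVF d Y → ∀ x,
    dd d (fun y => S.g y (X y) (Y y)) x (Z x)
      = S.g x (S.lie Z X x) (Y x) + S.g x (X x) (S.lie Z Y x)

/-- A vector field `Z` preserves the contact form: `L_Z η = 0`. -/
def PreservesEta (S : ContactMetricStructure d M) (Z : ∀ x : M, TangentSpace (𝓡 d) x) : Prop :=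
  ∀ X, IsSmoothVF d X → ∀ x,
    dd d (fun y => S.eta y (X y)) x (Z x) = S.eta x (S.lie Z X x)

/-- An infinitesimal automorphism of the contact metric structure:
a Killing field which also preserves the contact form. -/
def IsInfinitesimalAutomorphism (S : ContactMetricStructure d M)
    (Z : ∀ x : M, TangentSpace (𝓡 d) x) : Prop :=
  S.IsKilling Z ∧ S.PreservesEta Z

/-- The structure is K-contact: the Reeb field is Killing. -/
def IsKContact (S : ContactMetricStructure d M) : Prop :=
  S.IsKilling S.xi

end ContactMetricStructure

/-!
Work in the orthonormal frame `(ξ, E, φE)`. The contact condition and `2hE = [ξ, φE] - φ[ξ, E]`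
determine `∇ξ` up to the single function `a = g(∇_E ξ, E)`:
`∇_E ξ = aE - (1 + λ)φE` and `∇_{φE} ξ = (1 - λ)E + aφE`. By the `(κ, μ)`-condition,
`R(ξ, E)ξ ⟂ φE` and `R(ξ, φE)ξ ⟂ E`, which give `ξλ = -2(1 + λ)a` and `ξλ = 2(1 - λ)a`,
so `a = 0`. Then the `E`- and `φE`-components of `R(E, φE)ξ = 0` read
`dλ(E) = -2λ g(∇_{φE} E, φE)` and `dλ(φE) = 2λ g(∇_E E, φE)`.
-/

theorem LinearMap.BilinForm.eq_sum_smul_of_orthonormal {K V ι : Type*} [Field K]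
    [AddCommGroup V] [Module K V] [FiniteDimensional K V] [Fintype ι] [DecidableEq ι]
    (hcard : Fintype.card ι = Module.finrank K V) (B : LinearMap.BilinForm K V) (u : ι → V)
    (hu : ∀ i j, B (u i) (u j) = if i = j then 1 else 0) (v : V) :
    v = ∑ i, B v (u i) • u i := by
  have hli : LinearIndependent K u := by
    rw [Fintype.linearIndependent_iff]
    intro c hc j
    simpa [hu] using congrArg (fun w => B w (u j)) hc
  let b := basisOfLinearIndependentOfCardEqFinrank' u hli hcard
  have hcoord : ∀ j, B v (u j) = b.repr v j := by
    intro j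
    conv_lhs => rw [← b.sum_repr v]
    simp [b, hu]
  simpa [hcoord, b] using (b.sum_repr v).symm

section SmoothFields

variable {d : ℕ} {M : Type*} [TopologicalSpace M] [ChartedSpace (EuclideanSpace ℝ (Fin d)) M]

theorem dd_const (c : ℝ) (x : M) (v : TangentSpace (𝓡 d) x) : dd d (fun _ => c) x v = 0 := by
  simp only [dd, mfderiv_const]
  rfl

theorem dd_eq_mul_of_affine {f f' : M → ℝ} (hf : IsSmoothFn d f) (a b : ℝ)
    (hf' : ∀ y, f' y = a * f y + b) (x : M) (v : TangentSpace (𝓡 d) x) :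
    dd d f' x v = a * dd d f x v := by
  obtain rfl : f' = fun y => a * f y + b := funext hf'
  have hderiv : HasMFDerivAt (𝓡 d) 𝓘(ℝ) (fun y => a * f y + b) x
      (a • mfderiv (𝓡 d) 𝓘(ℝ) f x) :=
    ((((hf x).mdifferentiableAt (by simp)).hasMFDerivAt.const_smul a).add
      (hasMFDerivAt_const b x)).congr_mfderiv (add_zero _)
  rw [dd, hderiv.mfderiv]
  rfl

variable [IsManifold (𝓡 d) (⊤ : ℕ∞) M]

theorem IsSmoothVF.smul {f : M → ℝ} {X : ∀ x : M, TangentSpace (𝓡 d) x}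
    (hX : IsSmoothVF d X) (hf : IsSmoothFn d f) : IsSmoothVF d (fun y => f y • X y) := by
  intro x₀
  have hX₀ := hX x₀
  rw [Bundle.contMDiffAt_section] at hX₀ ⊢
  refine ((hf x₀).smul hX₀).congr_of_eventuallyEq ?_
  filter_upwards [(trivializationAt (EuclideanSpace ℝ (Fin d)) (TangentSpace (𝓡 d))
      x₀).open_baseSet.mem_nhds (mem_baseSet_trivializationAt _ _ x₀)] with y hy
  exact ((trivializationAt (EuclideanSpace ℝ (Fin d)) (TangentSpace (𝓡 d)) x₀).linear ℝ
    hy).map_smul _ _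

theorem IsSmoothVF.add {X Y : ∀ x : M, TangentSpace (𝓡 d) x}
    (hX : IsSmoothVF d X) (hY : IsSmoothVF d Y) : IsSmoothVF d (fun y => X y + Y y) := by
  intro x₀
  have hX₀ := hX x₀
  have hY₀ := hY x₀
  rw [Bundle.contMDiffAt_section] at hX₀ hY₀ ⊢
  refine (hX₀.add hY₀).congr_of_eventuallyEq ?_
  filter_upwards [(trivializationAt (EuclideanSpace ℝ (Fin d)) (TangentSpace (𝓡 d))
      x₀).open_baseSet.mem_nhds (mem_baseSet_trivializationAt _ _ x₀)] with y hy
  exact ((trivializationAt (EuclideanSpace ℝ (Fin d)) (TangentSpace (𝓡 d)) x₀).linear ℝ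
    hy).map_add _ _

end SmoothFields

namespace ContactMetricStructure

variable {d : ℕ} {M : Type*} [TopologicalSpace M] [ChartedSpace (EuclideanSpace ℝ (Fin d)) M]
  [IsManifold (𝓡 d) (⊤ : ℕ∞) M] (S : ContactMetricStructure d M)
  {X Y Z W : ∀ x : M, TangentSpace (𝓡 d) x} {f k : M → ℝ}

theorem g_xi_xi (x : M) : S.g x (S.xi x) (S.xi x) = 1 := by
  rw [← S.eta_eq_g_xi, S.eta_xi]

def christoffel (X Y Z : ∀ x : M, TangentSpace (𝓡 d) x) (x : M) : ℝ :=
  S.g x (S.nabla X Y x) (Z x)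

theorem christoffel_apply (x : M) : S.christoffel X Y Z x = S.g x (S.nabla X Y x) (Z x) := rfl

theorem christoffel_smooth (hX : IsSmoothVF d X) (hY : IsSmoothVF d Y) (hZ : IsSmoothVF d Z) :
    IsSmoothFn d (S.christoffel X Y Z) :=
  S.g_smooth _ _ (S.nabla_smooth X Y hX hY) hZ

def phiField (X : ∀ x : M, TangentSpace (𝓡 d) x) (x : M) : TangentSpace (𝓡 d) x :=
  S.phi x (X x)

theorem phiField_smooth (hX : IsSmoothVF d X) : IsSmoothVF d (S.phiField X) :=
  S.phi_smooth X hX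

theorem lie_eq_nabla_sub (hX : IsSmoothVF d X) (hY : IsSmoothVF d Y) (x : M) :
    S.lie X Y x = S.nabla X Y x - S.nabla Y X x :=
  (S.nabla_torsion_free X Y hX hY x).symm

theorem christoffel_eq_neg_of_g_const (hX : IsSmoothVF d X) (hY : IsSmoothVF d Y)
    (hZ : IsSmoothVF d Z) {c : ℝ} (hc : ∀ y, S.g y (Y y) (Z y) = c) (x : M) :
    S.christoffel X Y Z x = -S.christoffel X Z Y x := by
  have h := S.nabla_metric X Y Z hX hY hZ x
  rw [show (fun y => S.g y (Y y) (Z y)) = fun _ => c from funext hc, dd_const,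
    S.g_symm x (Y x)] at h
  simp only [christoffel_apply]
  linarith

theorem christoffel_self_eq_zero (hX : IsSmoothVF d X) (hY : IsSmoothVF d Y) {c : ℝ}
    (hc : ∀ y, S.g y (Y y) (Y y) = c) (x : M) : S.christoffel X Y Y x = 0 := by
  have := S.christoffel_eq_neg_of_g_const hX hY hY hc x
  linarith

theorem nabla_zero_right (hX : IsSmoothVF d X) (x : M) : S.nabla X (fun _ => 0) x = 0 := by
  simpa [dd_const] using S.nabla_leibniz (fun _ => 0) X X contMDiff_const hX hX x

theorem nabla_smul_add_smul_left (hf : IsSmoothFn d f) (hk : IsSmoothFn d k)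
    (hY : IsSmoothVF d Y) (hZ : IsSmoothVF d Z) (hW : IsSmoothVF d W) (x : M) :
    S.nabla (fun y => f y • Y y + k y • Z y) W x = f x • S.nabla Y W x + k x • S.nabla Z W x := by
  rw [S.nabla_add_left _ _ W (hY.smul hf) (hZ.smul hk) hW, S.nabla_smul_left f Y W hf hY hW,
    S.nabla_smul_left k Z W hk hZ hW]

theorem nabla_smul_add_smul_right (hf : IsSmoothFn d f) (hk : IsSmoothFn d k)
    (hX : IsSmoothVF d X) (hY : IsSmoothVF d Y) (hZ : IsSmoothVF d Z) (x : M) :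
    S.nabla X (fun y => f y • Y y + k y • Z y) x
      = dd d f x (X x) • Y x + f x • S.nabla X Y x
        + (dd d k x (X x) • Z x + k x • S.nabla X Z x) := by
  rw [S.nabla_add_right X _ _ hX (hY.smul hf) (hZ.smul hk), S.nabla_leibniz f X Y hf hX hY,
    S.nabla_leibniz k X Z hk hX hZ]

theorem lie_neg_right (hX : IsSmoothVF d X) (hY : IsSmoothVF d Y) (x : M) :
    S.lie X (fun y => -Y y) x = -S.lie X Y x := by
  have hneg : (fun y => -Y y) = fun y => (fun _ => (-1 : ℝ)) y • Y y := by
    funext y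
    simp
  rw [hneg, S.lie_eq_nabla_sub hX (hY.smul contMDiff_const),
    S.nabla_leibniz _ X Y contMDiff_const hX hY, S.nabla_smul_left _ Y X contMDiff_const hY hX,
    dd_const, S.lie_eq_nabla_sub hX hY]
  simp only [zero_smul, zero_add, neg_one_smul]
  abel

theorem g_phi_eq_neg (hX : IsSmoothVF d X) (hY : IsSmoothVF d Y) (x : M) :
    S.g x (X x) (S.phi x (Y x)) = -S.g x (Y x) (S.phi x (X x)) := by
  have hXY := S.contact X Y hX hY x
  have hYX := S.contact Y X hY hX x
  have hlie : S.lie Y X x = -S.lie X Y x := by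
    rw [S.lie_eq_nabla_sub hX hY, S.lie_eq_nabla_sub hY hX]
    abel
  rw [hlie, map_neg] at hYX
  linarith

theorem g_self_phi (hX : IsSmoothVF d X) (x : M) : S.g x (X x) (S.phi x (X x)) = 0 := by
  have := S.g_phi_eq_neg hX hX x
  linarith

theorem g_xi_phi (hX : IsSmoothVF d X) (x : M) : S.g x (S.xi x) (S.phi x (X x)) = 0 := by
  rw [S.g_phi_eq_neg S.xi_smooth hX x, S.phi_xi, map_zero, neg_zero]

theorem eta_phi (hX : IsSmoothVF d X) (x : M) : S.eta x (S.phi x (X x)) = 0 := by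
  rw [S.eta_eq_g_xi, S.g_xi_phi hX]

theorem g_phi_phi (hX : IsSmoothVF d X) (hY : IsSmoothVF d Y) (x : M) :
    S.g x (S.phi x (X x)) (S.phi x (Y x))
      = S.g x (X x) (Y x) - S.eta x (X x) * S.eta x (Y x) := by
  rw [S.g_phi_eq_neg (S.phi_smooth X hX) hY x, S.phi_sq, map_add, map_neg, map_smul,
    smul_eq_mul, S.g_symm x (Y x) (S.xi x), ← S.eta_eq_g_xi, S.g_symm x (Y x)]
  ring

theorem eta_lie_xi_eq_zero (hY : IsSmoothVF d Y) (hY0 : ∀ y, S.eta y (Y y) = 0) (x : M) :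
    S.eta x (S.lie S.xi Y x) = 0 := by
  have h := S.contact S.xi Y S.xi_smooth hY x
  rw [show (fun y => S.eta y (Y y)) = fun _ => 0 from funext hY0,
    show (fun y => S.eta y (S.xi y)) = fun _ => 1 from funext S.eta_xi, dd_const, dd_const,
    S.g_xi_phi hY] at h
  linarith

theorem christoffel_xi_xi_eq_zero (hY : IsSmoothVF d Y) (hY0 : ∀ y, S.eta y (Y y) = 0)
    (x : M) : S.christoffel S.xi S.xi Y x = 0 := by
  have hxi := S.xi_smooth
  have hYxi : ∀ y, S.g y (S.xi y) (Y y) = 0 := fun y => by rw [← S.eta_eq_g_xi, hY0]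
  have hlie := S.eta_lie_xi_eq_zero hY hY0 x
  rw [S.eta_eq_g_xi, S.g_symm, S.lie_eq_nabla_sub hxi hY, map_sub, LinearMap.sub_apply] at hlie
  have hself := S.christoffel_self_eq_zero hY hxi S.g_xi_xi x
  rw [S.christoffel_eq_neg_of_g_const hxi hxi hY hYxi]
  simp only [christoffel_apply] at hself ⊢
  linarith

def HasKappaMuNullity (κ μ : M → ℝ) : Prop :=
  ∀ (x : M) (u v : TangentSpace (𝓡 d) x),
    S.Rm x u v (S.xi x) = κ x • (S.eta x v • u - S.eta x u • v)
      + μ x • (S.eta x v • S.h x u - S.eta x u • S.h x v)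

structure IsUnitEigenfield (lam : M → ℝ) (E : ∀ x : M, TangentSpace (𝓡 d) x) : Prop where
  smooth : IsSmoothVF d E
  g_self : ∀ x, S.g x (E x) (E x) = 1
  h_eq : ∀ x, S.h x (E x) = lam x • E x
  ne_zero : ∀ x, lam x ≠ 0

variable {S}

theorem HasKappaMuNullity.rm_eq_zero {κ μ : M → ℝ} (hkm : S.HasKappaMuNullity κ μ) {x : M}
    {u v : TangentSpace (𝓡 d) x} (hu : S.eta x u = 0) (hv : S.eta x v = 0) :
    S.Rm x u v (S.xi x) = 0 := by
  simp [hkm x u v, hu, hv]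

theorem HasKappaMuNullity.rm_xi {κ μ : M → ℝ} (hkm : S.HasKappaMuNullity κ μ) {x : M}
    {u : TangentSpace (𝓡 d) x} (hu : S.eta x u = 0) :
    S.Rm x (S.xi x) u (S.xi x) = -(κ x • u + μ x • S.h x u) := by
  simp only [hkm x (S.xi x) u, hu, S.eta_xi, zero_smul, one_smul, zero_sub, smul_neg]
  abel

namespace IsUnitEigenfield

variable {lam : M → ℝ} {E : ∀ x : M, TangentSpace (𝓡 d) x}

theorem lam_smooth (hE : S.IsUnitEigenfield lam E) : IsSmoothFn d lam := by
  convert S.g_smooth _ _ (S.h_smooth E hE.smooth) hE.smooth using 1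
  funext x
  rw [hE.h_eq, map_smul, LinearMap.smul_apply, hE.g_self, smul_eq_mul, mul_one]

theorem lie_xi_phiField_sub (hE : S.IsUnitEigenfield lam E) (x : M) :
    S.lie S.xi (S.phiField E) x - S.phi x (S.lie S.xi E x) = (2 * lam x) • E x := by
  rw [mul_smul, ← hE.h_eq]
  exact (S.h_def E hE.smooth x).symm

theorem eta_phiField (hE : S.IsUnitEigenfield lam E) (x : M) : S.eta x (S.phiField E x) = 0 :=
  S.eta_phi hE.smooth x

theorem eta_eq_zero (hE : S.IsUnitEigenfield lam E) (x : M) : S.eta x (E x) = 0 := by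
  have h := congrArg (S.eta x) (hE.lie_xi_phiField_sub x)
  rw [map_sub, S.eta_lie_xi_eq_zero (S.phiField_smooth hE.smooth) hE.eta_phiField,
    S.eta_phi (S.lie_smooth _ _ S.xi_smooth hE.smooth), map_smul, smul_eq_mul, sub_zero] at h
  exact (mul_eq_zero.mp h.symm).resolve_left (mul_ne_zero two_ne_zero (hE.ne_zero x))

theorem g_xi_E (hE : S.IsUnitEigenfield lam E) (x : M) : S.g x (S.xi x) (E x) = 0 := by
  rw [← S.eta_eq_g_xi, hE.eta_eq_zero]

theorem g_E_xi (hE : S.IsUnitEigenfield lam E) (x : M) : S.g x (E x) (S.xi x) = 0 := by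
  rw [S.g_symm, hE.g_xi_E]

theorem g_xi_phiField (hE : S.IsUnitEigenfield lam E) (x : M) :
    S.g x (S.xi x) (S.phiField E x) = 0 :=
  S.g_xi_phi hE.smooth x

theorem g_phiField_xi (hE : S.IsUnitEigenfield lam E) (x : M) :
    S.g x (S.phiField E x) (S.xi x) = 0 := by
  rw [S.g_symm, hE.g_xi_phiField]

theorem g_E_phiField (hE : S.IsUnitEigenfield lam E) (x : M) :
    S.g x (E x) (S.phiField E x) = 0 :=
  S.g_self_phi hE.smooth x

theorem g_phiField_E (hE : S.IsUnitEigenfield lam E) (x : M) :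
    S.g x (S.phiField E x) (E x) = 0 := by
  rw [S.g_symm, hE.g_E_phiField]

theorem g_phiField_phiField (hE : S.IsUnitEigenfield lam E) (x : M) :
    S.g x (S.phiField E x) (S.phiField E x) = 1 := by
  rw [phiField, S.g_phi_phi hE.smooth hE.smooth, hE.g_self, hE.eta_eq_zero]
  ring

theorem phi_phiField (hE : S.IsUnitEigenfield lam E) (x : M) :
    S.phi x (S.phiField E x) = -E x := by
  rw [phiField, S.phi_sq, hE.eta_eq_zero, zero_smul, add_zero]

theorem eta_lie_phiField (hE : S.IsUnitEigenfield lam E) (x : M) :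
    S.eta x (S.lie E (S.phiField E) x) = 2 := by
  have h := S.contact E (S.phiField E) hE.smooth (S.phiField_smooth hE.smooth) x
  rw [show (fun y => S.eta y (S.phiField E y)) = fun _ => 0 from funext hE.eta_phiField,
    show (fun y => S.eta y (E y)) = fun _ => 0 from funext hE.eta_eq_zero, dd_const, dd_const,
    hE.phi_phiField, map_neg, hE.g_self] at h
  linarith

theorem h_phiField (hE : S.IsUnitEigenfield lam E) (x : M) :
    S.h x (S.phiField E x) = -lam x • S.phiField E x := by
  have hF := S.phiField_smooth hE.smooth
  have hlie : S.lie S.xi (fun y => S.phi y (S.phiField E y)) x = -S.lie S.xi E x := by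
    rw [show (fun y => S.phi y (S.phiField E y)) = fun y => -E y from funext hE.phi_phiField]
    exact S.lie_neg_right S.xi_smooth hE.smooth x
  have hphi : S.phi x (S.lie S.xi (S.phiField E) x)
      = (2 * lam x) • S.phiField E x - S.lie S.xi E x := by
    rw [sub_eq_iff_eq_add'.mp (hE.lie_xi_phiField_sub x), map_add, map_smul, S.phi_sq,
      S.eta_lie_xi_eq_zero hE.smooth hE.eta_eq_zero, zero_smul, add_zero, phiField]
    abel
  have h2 : (2 : ℝ) • S.h x (S.phiField E x) = (2 : ℝ) • (-lam x • S.phiField E x) := by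
    rw [S.h_def _ hF x, hlie, hphi, smul_smul, mul_neg, neg_smul]
    abel
  exact smul_right_injective _ two_ne_zero h2

-- The `E`-component of `[ξ, φE] - φ[ξ, E] = 2λE`.
theorem christoffel_phiField_xi_E_add (hE : S.IsUnitEigenfield lam E) (x : M) :
    S.christoffel (S.phiField E) S.xi E x + S.christoffel E S.xi (S.phiField E) x
      = -(2 * lam x) := by
  have hF := S.phiField_smooth hE.smooth
  have h := congrArg (fun v => S.g x v (E x)) (hE.lie_xi_phiField_sub x)
  have hanti := S.christoffel_eq_neg_of_g_const S.xi_smooth hF hE.smooth hE.g_phiField_E x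
  simp only [map_sub, LinearMap.sub_apply, map_smul, LinearMap.smul_apply, smul_eq_mul,
    hE.g_self, S.g_symm x (S.phi x _) (E x),
    S.g_phi_eq_neg hE.smooth (S.lie_smooth _ _ S.xi_smooth hE.smooth) x] at h
  rw [S.lie_eq_nabla_sub S.xi_smooth hF, S.lie_eq_nabla_sub S.xi_smooth hE.smooth] at h
  simp only [map_sub, LinearMap.sub_apply] at h
  simp only [christoffel_apply, phiField] at hanti ⊢
  linarith

-- The `φE`-component of `[ξ, φE] - φ[ξ, E] = 2λE`.
theorem christoffel_phiField_xi_phiField (hE : S.IsUnitEigenfield lam E) (x : M) :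
    S.christoffel (S.phiField E) S.xi (S.phiField E) x = S.christoffel E S.xi E x := by
  have hF := S.phiField_smooth hE.smooth
  have h := congrArg (fun v => S.g x v (S.phiField E x)) (hE.lie_xi_phiField_sub x)
  have hdiag := S.christoffel_self_eq_zero S.xi_smooth hF hE.g_phiField_phiField x
  have hdiag' := S.christoffel_self_eq_zero S.xi_smooth hE.smooth hE.g_self x
  simp only [map_sub, LinearMap.sub_apply, map_smul, LinearMap.smul_apply, smul_eq_mul,
    hE.g_E_phiField, mul_zero] at h
  rw [phiField, S.g_phi_phi (S.lie_smooth _ _ S.xi_smooth hE.smooth) hE.smooth,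
    hE.eta_eq_zero, mul_zero, sub_zero, S.lie_eq_nabla_sub S.xi_smooth hF,
    S.lie_eq_nabla_sub S.xi_smooth hE.smooth] at h
  simp only [map_sub, LinearMap.sub_apply] at h
  simp only [christoffel_apply, phiField] at hdiag hdiag' ⊢
  linarith

-- `η([E, φE]) = -dη(E, φE) = -2g(E, φ²E) = 2`.
theorem christoffel_phiField_xi_E_sub (hE : S.IsUnitEigenfield lam E) (x : M) :
    S.christoffel (S.phiField E) S.xi E x - S.christoffel E S.xi (S.phiField E) x = 2 := by
  have hF := S.phiField_smooth hE.smooth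
  have h := hE.eta_lie_phiField x
  have h1 := S.christoffel_eq_neg_of_g_const hE.smooth hF S.xi_smooth hE.g_phiField_xi x
  have h2 := S.christoffel_eq_neg_of_g_const hF hE.smooth S.xi_smooth hE.g_E_xi x
  rw [S.eta_eq_g_xi, S.g_symm, S.lie_eq_nabla_sub hE.smooth hF, map_sub,
    LinearMap.sub_apply] at h
  simp only [christoffel_apply] at h1 h2 ⊢
  linarith

theorem christoffel_E_xi_phiField (hE : S.IsUnitEigenfield lam E) (x : M) :
    S.christoffel E S.xi (S.phiField E) x = -(1 + lam x) := by
  linarith [hE.christoffel_phiField_xi_E_add x, hE.christoffel_phiField_xi_E_sub x]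

theorem christoffel_phiField_xi_E (hE : S.IsUnitEigenfield lam E) (x : M) :
    S.christoffel (S.phiField E) S.xi E x = 1 - lam x := by
  linarith [hE.christoffel_phiField_xi_E_add x, hE.christoffel_phiField_xi_E_sub x]

end IsUnitEigenfield

end ContactMetricStructure

namespace ContactMetricStructure.IsUnitEigenfield

variable {M : Type*} [TopologicalSpace M] [ChartedSpace (EuclideanSpace ℝ (Fin 3)) M]
  [IsManifold (𝓡 3) (⊤ : ℕ∞) M] {S : ContactMetricStructure 3 M} {lam : M → ℝ}
  {E : ∀ x : M, TangentSpace (𝓡 3) x}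

theorem eq_frame_sum (hE : S.IsUnitEigenfield lam E) (x : M) (v : TangentSpace (𝓡 3) x) :
    v = S.g x v (S.xi x) • S.xi x + S.g x v (E x) • E x
      + S.g x v (S.phiField E x) • S.phiField E x := by
  have hframe : ∀ i j, S.g x (![S.xi x, E x, S.phiField E x] i) (![S.xi x, E x, S.phiField E x] j)
      = if i = j then 1 else 0 := by
    intro i j
    fin_cases i <;> fin_cases j <;>
      simp [S.g_xi_xi, hE.g_self, hE.g_xi_E, hE.g_E_xi, hE.g_xi_phiField, hE.g_phiField_xi,
        hE.g_E_phiField, hE.g_phiField_E, hE.g_phiField_phiField]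
  have : FiniteDimensional ℝ (TangentSpace (𝓡 3) x) :=
    inferInstanceAs (FiniteDimensional ℝ (EuclideanSpace ℝ (Fin 3)))
  have hcard : Fintype.card (Fin 3) = Module.finrank ℝ (TangentSpace (𝓡 3) x) :=
    (finrank_euclideanSpace_fin (𝕜 := ℝ)).symm
  simpa [Fin.sum_univ_three] using
    LinearMap.BilinForm.eq_sum_smul_of_orthonormal hcard (S.g x) _ hframe v

theorem eq_of_frame_components (hE : S.IsUnitEigenfield lam E) {x : M}
    {v : TangentSpace (𝓡 3) x} {a b c : ℝ} (ha : S.g x v (S.xi x) = a) (hb : S.g x v (E x) = b)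
    (hc : S.g x v (S.phiField E x) = c) : v = a • S.xi x + b • E x + c • S.phiField E x := by
  rw [hE.eq_frame_sum x v, ha, hb, hc]

theorem nabla_xi_xi (hE : S.IsUnitEigenfield lam E) : S.nabla S.xi S.xi = fun _ => 0 := by
  funext x
  have hF := S.phiField_smooth hE.smooth
  rw [hE.eq_of_frame_components
    (S.christoffel_self_eq_zero S.xi_smooth S.xi_smooth S.g_xi_xi x)
    (S.christoffel_xi_xi_eq_zero hE.smooth hE.eta_eq_zero x)
    (S.christoffel_xi_xi_eq_zero hF hE.eta_phiField x)]
  simp only [zero_smul, add_zero]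

theorem nabla_E_xi (hE : S.IsUnitEigenfield lam E) :
    S.nabla E S.xi
      = fun y => S.christoffel E S.xi E y • E y + (-(1 + lam y)) • S.phiField E y := by
  funext x
  rw [hE.eq_of_frame_components (b := S.christoffel E S.xi E x)
    (S.christoffel_self_eq_zero hE.smooth S.xi_smooth S.g_xi_xi x) rfl
    (hE.christoffel_E_xi_phiField x), zero_smul, zero_add]

theorem nabla_phiField_xi (hE : S.IsUnitEigenfield lam E) :
    S.nabla (S.phiField E) S.xi
      = fun y => (1 - lam y) • E y + S.christoffel E S.xi E y • S.phiField E y := by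
  funext x
  rw [hE.eq_of_frame_components
    (S.christoffel_self_eq_zero (S.phiField_smooth hE.smooth) S.xi_smooth S.g_xi_xi x)
    (hE.christoffel_phiField_xi_E x) (hE.christoffel_phiField_xi_phiField x), zero_smul,
    zero_add]

theorem lie_xi_E (hE : S.IsUnitEigenfield lam E) :
    S.lie S.xi E = fun y => (-S.christoffel E S.xi E y) • E y
      + (S.christoffel S.xi E (S.phiField E) y + (1 + lam y)) • S.phiField E y := by
  funext x
  have hlie := S.lie_eq_nabla_sub S.xi_smooth hE.smooth x
  refine (hE.eq_of_frame_components (a := 0) (b := -S.christoffel E S.xi E x)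
    (c := S.christoffel S.xi E (S.phiField E) x + (1 + lam x)) ?_ ?_ ?_).trans
    (by rw [zero_smul, zero_add])
  · rw [S.g_symm, ← S.eta_eq_g_xi, S.eta_lie_xi_eq_zero hE.smooth hE.eta_eq_zero]
  · have := S.christoffel_self_eq_zero S.xi_smooth hE.smooth hE.g_self x
    rw [hlie, map_sub, LinearMap.sub_apply]
    simp only [christoffel_apply] at this ⊢
    linarith
  · have := hE.christoffel_E_xi_phiField x
    rw [hlie, map_sub, LinearMap.sub_apply]
    simp only [christoffel_apply] at this ⊢
    linarith

theorem lie_xi_phiField (hE : S.IsUnitEigenfield lam E) :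
    S.lie S.xi (S.phiField E)
      = fun y => (-(S.christoffel S.xi E (S.phiField E) y + (1 - lam y))) • E y
        + (-S.christoffel E S.xi E y) • S.phiField E y := by
  funext x
  have hF := S.phiField_smooth hE.smooth
  have hlie := S.lie_eq_nabla_sub S.xi_smooth hF x
  refine (hE.eq_of_frame_components (a := 0)
    (b := -(S.christoffel S.xi E (S.phiField E) x + (1 - lam x)))
    (c := -S.christoffel E S.xi E x) ?_ ?_ ?_).trans (by rw [zero_smul, zero_add])
  · rw [S.g_symm, ← S.eta_eq_g_xi, S.eta_lie_xi_eq_zero hF hE.eta_phiField]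
  · have h1 := S.christoffel_eq_neg_of_g_const S.xi_smooth hF hE.smooth hE.g_phiField_E x
    have h2 := hE.christoffel_phiField_xi_E x
    rw [hlie, map_sub, LinearMap.sub_apply]
    simp only [christoffel_apply] at h1 h2 ⊢
    linarith
  · have h1 := S.christoffel_self_eq_zero S.xi_smooth hF hE.g_phiField_phiField x
    have h2 := hE.christoffel_phiField_xi_phiField x
    rw [hlie, map_sub, LinearMap.sub_apply]
    simp only [christoffel_apply] at h1 h2 ⊢
    linarith

theorem lie_E_phiField (hE : S.IsUnitEigenfield lam E) :
    S.lie E (S.phiField E) = fun y => (2 : ℝ) • S.xi y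
      + (-S.christoffel E E (S.phiField E) y) • E y
      + (-S.christoffel (S.phiField E) E (S.phiField E) y) • S.phiField E y := by
  funext x
  have hF := S.phiField_smooth hE.smooth
  have hlie := S.lie_eq_nabla_sub hE.smooth hF x
  refine hE.eq_of_frame_components ?_ ?_ ?_
  · rw [S.g_symm, ← S.eta_eq_g_xi, hE.eta_lie_phiField]
  · have h1 := S.christoffel_eq_neg_of_g_const hE.smooth hF hE.smooth hE.g_phiField_E x
    have h2 := S.christoffel_self_eq_zero hF hE.smooth hE.g_self x
    rw [hlie, map_sub, LinearMap.sub_apply]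
    simp only [christoffel_apply] at h1 h2 ⊢
    linarith
  · have h1 := S.christoffel_self_eq_zero hE.smooth hF hE.g_phiField_phiField x
    rw [hlie, map_sub, LinearMap.sub_apply]
    simp only [christoffel_apply] at h1 ⊢
    linarith

theorem dd_lam_xi_eq_of_rm_xi_E {κ μ : M → ℝ} (hE : S.IsUnitEigenfield lam E)
    (hkm : S.HasKappaMuNullity κ μ) (x : M) :
    dd 3 lam x (S.xi x) = -(2 * (1 + lam x) * S.christoffel E S.xi E x) := by
  have hxi := S.xi_smooth
  have hF := S.phiField_smooth hE.smooth
  have ha := S.christoffel_smooth hE.smooth hxi hE.smooth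
  have hc := S.christoffel_smooth hxi hE.smooth hF
  have hcoef : IsSmoothFn 3 (fun y => -(1 + lam y)) := (contMDiff_const.add hE.lam_smooth).neg
  have h1 : S.nabla S.xi (S.nabla E S.xi) x
      = dd 3 (S.christoffel E S.xi E) x (S.xi x) • E x + S.christoffel E S.xi E x • S.nabla S.xi E x
        + (dd 3 (fun y => -(1 + lam y)) x (S.xi x) • S.phiField E x
          + (-(1 + lam x)) • S.nabla S.xi (S.phiField E) x) := by
    rw [hE.nabla_E_xi]
    exact S.nabla_smul_add_smul_right ha hcoef hxi hE.smooth hF x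
  have h2 : S.nabla E (S.nabla S.xi S.xi) x = 0 := by
    rw [hE.nabla_xi_xi]
    exact S.nabla_zero_right hE.smooth x
  have h3 : S.nabla (S.lie S.xi E) S.xi x
      = (-S.christoffel E S.xi E x) • S.nabla E S.xi x
        + (S.christoffel S.xi E (S.phiField E) x + (1 + lam x))
          • S.nabla (S.phiField E) S.xi x := by
    rw [hE.lie_xi_E]
    exact S.nabla_smul_add_smul_left ha.neg (hc.add (contMDiff_const.add hE.lam_smooth))
      hE.smooth hF hxi x
  have hdd : dd 3 (fun y => -(1 + lam y)) x (S.xi x) = -dd 3 lam x (S.xi x) := by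
    rw [dd_eq_mul_of_affine hE.lam_smooth (-1) (-1) (fun y => by ring)]
    ring
  have hR := congrArg (fun v => S.g x v (S.phiField E x)) (S.Rm_def S.xi E S.xi hxi hE.smooth hxi x)
  simp only [hkm.rm_xi (hE.eta_eq_zero x), hE.h_eq, h1, h2, h3, hdd, map_add, map_sub, map_smul,
    map_neg, map_zero, LinearMap.add_apply, LinearMap.sub_apply, LinearMap.smul_apply,
    LinearMap.neg_apply, LinearMap.zero_apply, smul_eq_mul, hE.g_E_phiField,
    hE.g_phiField_phiField] at hR
  have hEξF := hE.christoffel_E_xi_phiField x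
  have hFξF := hE.christoffel_phiField_xi_phiField x
  have hξFF := S.christoffel_self_eq_zero hxi hF hE.g_phiField_phiField x
  simp only [christoffel_apply] at hR hEξF hFξF hξFF ⊢
  rw [hEξF, hFξF, hξFF] at hR
  linear_combination hR

theorem dd_lam_xi_eq_of_rm_xi_phiField {κ μ : M → ℝ} (hE : S.IsUnitEigenfield lam E)
    (hkm : S.HasKappaMuNullity κ μ) (x : M) :
    dd 3 lam x (S.xi x) = 2 * (1 - lam x) * S.christoffel E S.xi E x := by
  have hxi := S.xi_smooth
  have hF := S.phiField_smooth hE.smooth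
  have ha := S.christoffel_smooth hE.smooth hxi hE.smooth
  have hc := S.christoffel_smooth hxi hE.smooth hF
  have hcoef : IsSmoothFn 3 (fun y => 1 - lam y) := contMDiff_const.sub hE.lam_smooth
  have h1 : S.nabla S.xi (S.nabla (S.phiField E) S.xi) x
      = dd 3 (fun y => 1 - lam y) x (S.xi x) • E x + (1 - lam x) • S.nabla S.xi E x
        + (dd 3 (S.christoffel E S.xi E) x (S.xi x) • S.phiField E x
          + S.christoffel E S.xi E x • S.nabla S.xi (S.phiField E) x) := by
    rw [hE.nabla_phiField_xi]
    exact S.nabla_smul_add_smul_right hcoef ha hxi hE.smooth hF x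
  have h2 : S.nabla (S.phiField E) (S.nabla S.xi S.xi) x = 0 := by
    rw [hE.nabla_xi_xi]
    exact S.nabla_zero_right hF x
  have h3 : S.nabla (S.lie S.xi (S.phiField E)) S.xi x
      = (-(S.christoffel S.xi E (S.phiField E) x + (1 - lam x))) • S.nabla E S.xi x
        + (-S.christoffel E S.xi E x) • S.nabla (S.phiField E) S.xi x := by
    rw [hE.lie_xi_phiField]
    exact S.nabla_smul_add_smul_left (hc.add hcoef).neg ha.neg hE.smooth hF hxi x
  have hdd : dd 3 (fun y => 1 - lam y) x (S.xi x) = -dd 3 lam x (S.xi x) := by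
    rw [dd_eq_mul_of_affine hE.lam_smooth (-1) 1 (fun y => by ring)]
    ring
  have hR := congrArg (fun v => S.g x v (E x)) (S.Rm_def S.xi (S.phiField E) S.xi hxi hF hxi x)
  simp only [hkm.rm_xi (hE.eta_phiField x), hE.h_phiField, h1, h2, h3, hdd, map_add,
    map_sub, map_smul, map_neg, map_zero, LinearMap.add_apply, LinearMap.sub_apply,
    LinearMap.smul_apply, LinearMap.neg_apply, LinearMap.zero_apply, smul_eq_mul,
    hE.g_phiField_E, hE.g_self] at hR
  have hξEE := S.christoffel_self_eq_zero hxi hE.smooth hE.g_self x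
  have hξFE := S.christoffel_eq_neg_of_g_const hxi hF hE.smooth hE.g_phiField_E x
  have hFξE := hE.christoffel_phiField_xi_E x
  simp only [christoffel_apply] at hR hξEE hξFE hFξE ⊢
  rw [hξEE, hξFE, hFξE] at hR
  linear_combination hR

theorem christoffel_E_xi_E_eq_zero {κ μ : M → ℝ} (hE : S.IsUnitEigenfield lam E)
    (hkm : S.HasKappaMuNullity κ μ) (x : M) : S.christoffel E S.xi E x = 0 := by
  have hE_comp := hE.dd_lam_xi_eq_of_rm_xi_E hkm x
  have hφE_comp := hE.dd_lam_xi_eq_of_rm_xi_phiField hkm x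
  linear_combination (hE_comp - hφE_comp) / 4

theorem rm_E_phiField_xi (hE : S.IsUnitEigenfield lam E)
    (ha : ∀ y, S.christoffel E S.xi E y = 0) (x : M) :
    S.Rm x (E x) (S.phiField E x) (S.xi x)
      = (-dd 3 lam x (E x)) • E x + (1 - lam x) • S.nabla E E x
        + dd 3 lam x (S.phiField E x) • S.phiField E x
        + (1 + lam x) • S.nabla (S.phiField E) (S.phiField E) x
        + S.christoffel E E (S.phiField E) x • S.nabla E S.xi x
        + S.christoffel (S.phiField E) E (S.phiField E) x • S.nabla (S.phiField E) S.xi x := by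
  have hxi := S.xi_smooth
  have hF := S.phiField_smooth hE.smooth
  have ha0 : S.christoffel E S.xi E = fun _ => 0 := funext ha
  have hb := S.christoffel_smooth hE.smooth hE.smooth hF
  have hc := S.christoffel_smooth hF hE.smooth hF
  have hsub : IsSmoothFn 3 (fun y => 1 - lam y) := contMDiff_const.sub hE.lam_smooth
  have hadd : IsSmoothFn 3 (fun y => -(1 + lam y)) := (contMDiff_const.add hE.lam_smooth).neg
  have h1 : S.nabla E (S.nabla (S.phiField E) S.xi) x
      = (-dd 3 lam x (E x)) • E x + (1 - lam x) • S.nabla E E x := by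
    rw [hE.nabla_phiField_xi, ha0, S.nabla_smul_add_smul_right hsub contMDiff_const hE.smooth
      hE.smooth hF, dd_const, dd_eq_mul_of_affine hE.lam_smooth (-1) 1 (fun y => by ring)]
    simp only [zero_smul, add_zero, neg_one_mul]
  have h2 : S.nabla (S.phiField E) (S.nabla E S.xi) x
      = (-dd 3 lam x (S.phiField E x)) • S.phiField E x
        + (-(1 + lam x)) • S.nabla (S.phiField E) (S.phiField E) x := by
    rw [hE.nabla_E_xi, ha0, S.nabla_smul_add_smul_right contMDiff_const hadd hF hE.smooth hF,
      dd_const, dd_eq_mul_of_affine hE.lam_smooth (-1) (-1) (fun y => by ring)]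
    simp only [zero_smul, zero_add, neg_one_mul]
  have h3 : S.nabla (S.lie E (S.phiField E)) S.xi x
      = (-S.christoffel E E (S.phiField E) x) • S.nabla E S.xi x
        + (-S.christoffel (S.phiField E) E (S.phiField E) x) • S.nabla (S.phiField E) S.xi x := by
    rw [hE.lie_E_phiField, S.nabla_add_left _ _ _
      ((hxi.smul contMDiff_const).add (hE.smooth.smul hb.neg)) (hF.smul hc.neg) hxi,
      S.nabla_smul_add_smul_left contMDiff_const hb.neg hxi hE.smooth hxi,
      S.nabla_smul_left _ _ _ hc.neg hF hxi, hE.nabla_xi_xi, smul_zero, zero_add]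
  rw [S.Rm_def E (S.phiField E) S.xi hE.smooth hF hxi x, h1, h2, h3]
  module

theorem dd_lam_E {κ μ : M → ℝ} (hE : S.IsUnitEigenfield lam E)
    (hkm : S.HasKappaMuNullity κ μ) (x : M) :
    dd 3 lam x (E x) = -(2 * lam x * S.christoffel (S.phiField E) E (S.phiField E) x) := by
  have hF := S.phiField_smooth hE.smooth
  have ha := hE.christoffel_E_xi_E_eq_zero hkm
  have hR := congrArg (fun v => S.g x v (E x)) (hE.rm_E_phiField_xi ha x)
  simp only [hkm.rm_eq_zero (hE.eta_eq_zero x) (hE.eta_phiField x), map_add, map_smul,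
    map_zero, LinearMap.add_apply, LinearMap.smul_apply, LinearMap.zero_apply, smul_eq_mul,
    hE.g_self, hE.g_phiField_E] at hR
  have hEEE := S.christoffel_self_eq_zero hE.smooth hE.smooth hE.g_self x
  have hFFE := S.christoffel_eq_neg_of_g_const hF hF hE.smooth hE.g_phiField_E x
  have hFξE := hE.christoffel_phiField_xi_E x
  have hEξE := ha x
  simp only [christoffel_apply] at hR hEEE hFFE hFξE hEξE ⊢
  rw [hEEE, hFFE, hFξE, hEξE] at hR
  linear_combination hR

theorem dd_lam_phiField {κ μ : M → ℝ} (hE : S.IsUnitEigenfield lam E)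
    (hkm : S.HasKappaMuNullity κ μ) (x : M) :
    dd 3 lam x (S.phiField E x) = 2 * lam x * S.christoffel E E (S.phiField E) x := by
  have hF := S.phiField_smooth hE.smooth
  have ha := hE.christoffel_E_xi_E_eq_zero hkm
  have hR := congrArg (fun v => S.g x v (S.phiField E x)) (hE.rm_E_phiField_xi ha x)
  simp only [hkm.rm_eq_zero (hE.eta_eq_zero x) (hE.eta_phiField x), map_add, map_smul,
    map_zero, LinearMap.add_apply, LinearMap.smul_apply, LinearMap.zero_apply, smul_eq_mul,
    hE.g_phiField_phiField, hE.g_E_phiField] at hR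
  have hFFF := S.christoffel_self_eq_zero hF hF hE.g_phiField_phiField x
  have hEξF := hE.christoffel_E_xi_phiField x
  have hFξF := hE.christoffel_phiField_xi_phiField x
  rw [ha x] at hFξF
  simp only [christoffel_apply] at hR hFFF hEξF hFξF ⊢
  rw [hFFF, hEξF, hFξF] at hR
  linear_combination -hR

theorem nabla_E_E {κ μ : M → ℝ} (hE : S.IsUnitEigenfield lam E)
    (hkm : S.HasKappaMuNullity κ μ) (x : M) :
    S.nabla E E x = S.christoffel E E (S.phiField E) x • S.phiField E x := by
  have hξ : S.christoffel E E S.xi x = 0 := by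
    rw [S.christoffel_eq_neg_of_g_const hE.smooth hE.smooth S.xi_smooth hE.g_E_xi,
      hE.christoffel_E_xi_E_eq_zero hkm, neg_zero]
  rw [hE.eq_of_frame_components (c := S.christoffel E E (S.phiField E) x) hξ
    (S.christoffel_self_eq_zero hE.smooth hE.smooth hE.g_self x)
    rfl, zero_smul, zero_smul, zero_add, zero_add]

theorem nabla_phiField_phiField {κ μ : M → ℝ} (hE : S.IsUnitEigenfield lam E)
    (hkm : S.HasKappaMuNullity κ μ) (x : M) :
    S.nabla (S.phiField E) (S.phiField E) x
      = (-S.christoffel (S.phiField E) E (S.phiField E) x) • E x := by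
  have hF := S.phiField_smooth hE.smooth
  have hξ : S.christoffel (S.phiField E) (S.phiField E) S.xi x = 0 := by
    rw [S.christoffel_eq_neg_of_g_const hF hF S.xi_smooth hE.g_phiField_xi,
      hE.christoffel_phiField_xi_phiField, hE.christoffel_E_xi_E_eq_zero hkm, neg_zero]
  rw [hE.eq_of_frame_components hξ
    (S.christoffel_eq_neg_of_g_const hF hF hE.smooth hE.g_phiField_E x)
    (S.christoffel_self_eq_zero hF hF hE.g_phiField_phiField x), zero_smul, zero_smul, zero_add,
    add_zero]

end ContactMetricStructure.IsUnitEigenfield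

open ContactMetricStructure in
theorem statement_2_general {M : Type*} [TopologicalSpace M]
    [ChartedSpace (EuclideanSpace ℝ (Fin 3)) M] [IsManifold (𝓡 3) (⊤ : ℕ∞) M]
    (S : ContactMetricStructure 3 M)
    (κ μ : M → ℝ)
    (hkm : ∀ (x : M) (u v : TangentSpace (𝓡 3) x),
      S.Rm x u v (S.xi x) = κ x • (S.eta x v • u - S.eta x u • v)
        + μ x • (S.eta x v • S.h x u - S.eta x u • S.h x v))
    (hκ1 : ∀ x, κ x < 1)
    (lam : M → ℝ) (hlam : ∀ x, lam x = Real.sqrt (1 - κ x))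
    (E : ∀ x : M, TangentSpace (𝓡 3) x) (hE : IsSmoothVF 3 E)
    (hEunit : ∀ x, S.g x (E x) (E x) = 1)
    (hEeig : ∀ x, S.h x (E x) = lam x • E x)
 :
    ∀ x : M,
      S.nabla E E x = (dd 3 lam x (S.phi x (E x)) / (2 * lam x)) • S.phi x (E x)
      ∧ S.nabla (fun y => S.phi y (E y)) (fun y => S.phi y (E y)) x
          = (dd 3 lam x (E x) / (2 * lam x)) • E x := by
  have hlam_ne : ∀ x, lam x ≠ 0 := fun x => by
    rw [hlam]
    exact (Real.sqrt_pos.mpr (by linarith [hκ1 x])).ne'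
  have hEig : S.IsUnitEigenfield lam E := ⟨hE, hEunit, hEeig, hlam_ne⟩
  have hnull : S.HasKappaMuNullity κ μ := hkm
  intro x
  have h2lam : 2 * lam x ≠ 0 := mul_ne_zero two_ne_zero (hlam_ne x)
  refine ⟨?_, ?_⟩
  · change S.nabla E E x = (dd 3 lam x (S.phiField E x) / (2 * lam x)) • S.phiField E x
    rw [hEig.nabla_E_E hnull, hEig.dd_lam_phiField hnull, mul_div_cancel_left₀ _ h2lam]
  · change S.nabla (S.phiField E) (S.phiField E) x = _
    rw [hEig.nabla_phiField_phiField hnull, hEig.dd_lam_E hnull, neg_div,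
      mul_div_cancel_left₀ _ h2lam]

open ContactMetricStructure in
/-- On a 3-dimensional generalized (κ,μ)-space with `κ < 1`, `λ = √(1-κ)` and `E` a unit
eigenvector field of `h` with `hE = λE`, one has `∇_E E = (dλ(φE)/(2λ)) φE` and
`∇_{φE} φE = (dλ(E)/(2λ)) E`. -/
theorem statement_2 {M : Type*} [TopologicalSpace M]
    [ChartedSpace (EuclideanSpace ℝ (Fin 3)) M] [IsManifold (𝓡 3) (⊤ : ℕ∞) M]
    (S : ContactMetricStructure 3 M)
    (κ μ : M → ℝ) (hκ : IsSmoothFn 3 κ) (hμ : IsSmoothFn 3 μ)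
    (hkm : ∀ (x : M) (u v : TangentSpace (𝓡 3) x),
      S.Rm x u v (S.xi x) = κ x • (S.eta x v • u - S.eta x u • v)
        + μ x • (S.eta x v • S.h x u - S.eta x u • S.h x v))
    (hgen : (¬ ∃ c : ℝ, ∀ x, κ x = c) ∨ (¬ ∃ c : ℝ, ∀ x, μ x = c))
    (hκ1 : ∀ x, κ x < 1)
    (lam : M → ℝ) (hlam : ∀ x, lam x = Real.sqrt (1 - κ x))
    (E : ∀ x : M, TangentSpace (𝓡 3) x) (hE : IsSmoothVF 3 E)
    (hEunit : ∀ x, S.g x (E x) (E x) = 1)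
    (hEeig : ∀ x, S.h x (E x) = lam x • E x)
 :
    ∀ x : M,
      S.nabla E E x = (dd 3 lam x (S.phi x (E x)) / (2 * lam x)) • S.phi x (E x)
      ∧ S.nabla (fun y => S.phi y (E y)) (fun y => S.phi y (E y)) x
          = (dd 3 lam x (E x) / (2 * lam x)) • E x :=
  statement_2_general S κ μ hkm hκ1 lam hlam E hE hEunit hEeig
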